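/- The coproduct on the Connes-Kreimer Hopf algebra of rooted trees defined by the admissible-cut formula Δ(t) = 𝟙 ⊗ t + t ⊗ 𝟙 + Σ_{admissible cuts c} P_c(t) ⊗ R_c(t) is coassociative. -/

import Mathlib

/-!
The grafting operator `B₊` is a Hochschild 1-cocycle: `Δ ∘ B₊ = B₊ ⊗ 𝟙 + (id ⊗ B₊) ∘ Δ`, and
a tree `•_l` with children `l` satisfies the same identity with `B₊` applied to the forest `l`.
For any linear `Δ` with `Δ 𝟙 = 𝟙 ⊗ 𝟙`, this identity transports coassociativity from the
forest to the tree. Since `Δ` is an algebra map, the elements at which it is coassociative form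
a subalgebra (an equalizer of two algebra maps), so coassociativity of the children gives that of
their forest, and induction on trees reaches every generator of `HCK`.
-/

open MvPolynomial TensorProduct

/-- Rooted trees: a root together with a list of subtrees. -/
inductive RT : Type
  | node : List RT → RT

/-- The free commutative algebra generated by rooted trees. -/
abbrev HCK : Type := MvPolynomial RT ℚ

mutual
/-- All ways of choosing, for each child of a vertex, either to cut the edge to that
child (the child then joins the pruned part) or to perform an admissible cut (possibly
empty) inside the child; returns the pruned part (a forest, as a monomial in `HCK`)
and the list of surviving children. -/
noncomputable def childChoices : List RT → List (HCK × List RT)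
  | [] => [(1, [])]
  | c :: rest =>
      ((childChoices rest).map fun pr => (X c * pr.1, pr.2)) ++
      ((allCuts c).flatMap fun qs =>
        (childChoices rest).map fun pr => (qs.1 * pr.1, qs.2 :: pr.2))
/-- All admissible cuts of a rooted tree (including the empty cut), each given by its
pruned part `P_c` (a forest) and its root part `R_c` (a tree). -/
noncomputable def allCuts : RT → List (HCK × RT)
  | .node l => (childChoices l).map fun pr =>
      (pr.1, .node (Multiset.toList (↑pr.2 : Multiset RT)))
end

/-- The coproduct on a single generator (tree) `t`, by the admissible-cut formula
`Δ(t) = t ⊗ 𝟙 + Σ_{cuts c, incl. the empty cut} P_c(t) ⊗ R_c(t)`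
(the empty cut contributes the term `𝟙 ⊗ t`). -/
noncomputable def deltaGen (t : RT) : HCK ⊗[ℚ] HCK :=
  X t ⊗ₜ[ℚ] 1 + ((allCuts t).map fun pr => pr.1 ⊗ₜ[ℚ] X pr.2).sum

/-- The admissible-cut coproduct `Δ`, extended to `HCK` as an algebra homomorphism. -/
noncomputable def delta : HCK →ₐ[ℚ] HCK ⊗[ℚ] HCK := aeval deltaGen

/-- The grafting operator `B₊`, sending a forest (monomial) `t₁⋯t_n` to the tree
obtained by attaching the roots of `t₁,…,t_n` to a new root (and `B₊(𝟙) = •`). -/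
noncomputable def Bplus : HCK →ₗ[ℚ] HCK :=
  (basisMonomials RT ℚ).constr ℚ
    fun m => (X (RT.node (Finsupp.toMultiset m).toList) : HCK)

open LinearMap

section Coassociativity

variable {R A : Type*} [CommSemiring R]

def IsCoassocAt [AddCommMonoid A] [Module R A] (Δ : A →ₗ[R] A ⊗[R] A) (x : A) : Prop :=
  lTensor A Δ (Δ x) = TensorProduct.assoc R A A A (rTensor A Δ (Δ x))

theorem isCoassocAt_of_cocycle [Semiring A] [Algebra R A] {Δ : A →ₗ[R] A ⊗[R] A}
    {B : A →ₗ[R] A} (hΔ : Δ 1 = 1 ⊗ₜ 1)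
    (hB : ∀ x, Δ (B x) = B x ⊗ₜ 1 + lTensor A B (Δ x)) {x y : A}
    (hy : Δ y = y ⊗ₜ 1 + lTensor A B (Δ x)) (hx : IsCoassocAt Δ x) :
    IsCoassocAt Δ y := by
  have hcocycle : ∀ z : A ⊗[R] A, lTensor A Δ (lTensor A B z) =
      TensorProduct.assoc R A A A (lTensor A B z ⊗ₜ 1) +
        lTensor A (lTensor A B) (lTensor A Δ z) := by
    intro z
    induction z with
    | zero => simp
    | tmul a b => simp [hB, tmul_add]
    | add z w hz hw => simp only [map_add, add_tmul, hz, hw]; abel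
  have hnat : ∀ z : A ⊗[R] A, TensorProduct.assoc R A A A (rTensor A Δ (lTensor A B z)) =
      lTensor A (lTensor A B) (TensorProduct.assoc R A A A (rTensor A Δ z)) := by
    intro z
    rw [← LinearMap.comp_apply (rTensor A Δ), rTensor_comp_lTensor, ← lTensor_comp_rTensor,
      LinearMap.comp_apply, lTensor_tensor]
    simp
  unfold IsCoassocAt at hx ⊢
  rw [hy, map_add, map_add, map_add, hcocycle, lTensor_tmul, rTensor_tmul, hy, add_tmul, map_add, hnat,
    hΔ, ← hx, TensorProduct.assoc_tmul]
  abel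

def coassocSubalgebra [Semiring A] [Algebra R A] (Δ : A →ₐ[R] A ⊗[R] A) : Subalgebra R A :=
  AlgHom.equalizer ((Algebra.TensorProduct.lTensor A Δ).comp Δ)
    ((Algebra.TensorProduct.assoc R R R A A A).toAlgHom.comp
      ((Algebra.TensorProduct.rTensor A Δ).comp Δ))

theorem mem_coassocSubalgebra [Semiring A] [Algebra R A] {Δ : A →ₐ[R] A ⊗[R] A} {x : A} :
    x ∈ coassocSubalgebra Δ ↔ IsCoassocAt Δ.toLinearMap x := Iff.rfl

theorem MvPolynomial.coassocSubalgebra_eq_top {σ : Type*}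
    {Δ : MvPolynomial σ R →ₐ[R] MvPolynomial σ R ⊗[R] MvPolynomial σ R}
    (h : ∀ i, IsCoassocAt Δ.toLinearMap (X i)) : coassocSubalgebra Δ = ⊤ :=
  eq_top_iff.2 <| adjoin_range_X (R := R) ▸ Algebra.adjoin_le (Set.range_subset_iff.2 h)

end Coassociativity

theorem List.sum_map_mul_sum_map {α β M : Type*} [NonUnitalNonAssocSemiring M]
    (l₁ : List α) (l₂ : List β) (f : α → M) (g : β → M) :
    (l₁.map f).sum * (l₂.map g).sum = (l₁.flatMap fun a => l₂.map fun b => f a * g b).sum := by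
  simp only [List.flatMap_def, List.sum_flatten, List.map_map, Function.comp_def,
    List.sum_map_mul_left, List.sum_map_mul_right]

noncomputable def forest (s : Multiset RT) : HCK := (s.map X).prod

theorem forest_cons (c : RT) (s : Multiset RT) : forest (c ::ₘ s) = X c * forest s := by
  rw [forest, Multiset.map_cons, Multiset.prod_cons, forest]

theorem forest_add (s t : Multiset RT) : forest (s + t) = forest s * forest t := by
  rw [forest, Multiset.map_add, Multiset.prod_add, forest, forest]

theorem forest_toMultiset (m : RT →₀ ℕ) : forest (Finsupp.toMultiset m) = monomial m 1 := by
  induction m using Finsupp.induction with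
  | zero => simp [forest]
  | single_add a n m _ _ ih =>
    rw [Finsupp.toMultiset_add, forest_add, ih, Finsupp.toMultiset_single, forest,
      Multiset.map_nsmul, Multiset.prod_nsmul, Multiset.map_singleton, Multiset.prod_singleton, X_pow_eq_monomial, monomial_mul, one_mul]

theorem Bplus_monomial (m : RT →₀ ℕ) :
    Bplus (monomial m 1) = X (RT.node (Finsupp.toMultiset m).toList) := by
  simpa [Bplus] using (basisMonomials RT ℚ).constr_basis ℚ
    (fun m => (X (RT.node (Finsupp.toMultiset m).toList) : HCK)) m

theorem Bplus_forest (s : Multiset RT) : Bplus (forest s) = X (RT.node s.toList) := by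
  classical
  rw [← Multiset.toFinsupp_toMultiset s, forest_toMultiset, Bplus_monomial]

theorem delta_X (t : RT) : delta (X t) = deltaGen t := aeval_X _ _

theorem delta_forest (l : List RT) :
    delta (forest l) = ((childChoices l).map fun pr => pr.1 ⊗ₜ[ℚ] forest pr.2).sum := by
  induction l with
  | nil => simp [childChoices.eq_1, forest, Algebra.TensorProduct.one_def]
  | cons c l ih =>
    rw [← Multiset.cons_coe, forest_cons, map_mul, ih, delta_X, deltaGen, add_mul, childChoices.eq_2,
      List.map_append, List.sum_append, List.map_map, List.map_flatMap, List.sum_map_mul_sum_map,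
      ← List.sum_map_mul_left]
    simp only [Function.comp_def, List.map_map, Algebra.TensorProduct.tmul_mul_tmul, one_mul,
      ← Multiset.cons_coe, forest_cons]

theorem delta_X_node (l : List RT) :
    delta (X (.node l)) = X (.node l) ⊗ₜ 1 + lTensor HCK Bplus (delta (forest l)) := by
  rw [delta_X, deltaGen, delta_forest, allCuts.eq_1, map_list_sum, List.map_map, List.map_map]
  simp only [Function.comp_def, lTensor_tmul, Bplus_forest]

theorem delta_Bplus (x : HCK) :
    delta (Bplus x) = Bplus x ⊗ₜ 1 + lTensor HCK Bplus (delta x) := by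
  let rhs : HCK →ₗ[ℚ] HCK ⊗[ℚ] HCK :=
    (TensorProduct.mk ℚ HCK HCK).flip 1 ∘ₗ Bplus + lTensor HCK Bplus ∘ₗ delta.toLinearMap
  suffices delta.toLinearMap ∘ₗ Bplus = rhs from LinearMap.congr_fun this x
  refine (basisMonomials RT ℚ).ext fun m => ?_
  simp only [coe_basisMonomials, rhs, LinearMap.comp_apply, LinearMap.add_apply,
    AlgHom.toLinearMap_apply, Bplus_monomial, delta_X_node, Multiset.coe_toList,
    forest_toMultiset, LinearMap.flip_apply, TensorProduct.mk_apply]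

theorem isCoassocAt_delta_X : ∀ t : RT, IsCoassocAt delta.toLinearMap (X t)
  | .node l => by
    have hl : forest l ∈ coassocSubalgebra delta := by
      refine Subalgebra.multiset_prod_mem _ fun x hx => ?_
      obtain ⟨c, hc, rfl⟩ := Multiset.mem_map.1 hx
      -- makes `sizeOf c < sizeOf (.node l)` visible to `decreasing_by`
      have hcl : c ∈ l := Multiset.mem_coe.1 hc
      exact isCoassocAt_delta_X c
    exact isCoassocAt_of_cocycle (by simp [Algebra.TensorProduct.one_def]) delta_Bplus
      (delta_X_node l) hl

/-- The admissible-cut coproduct on the Connes-Kreimer Hopf algebra of rooted trees is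
coassociative. -/
theorem stmt_12 (x : HCK) :
    LinearMap.lTensor HCK delta.toLinearMap (delta x) =
      TensorProduct.assoc ℚ HCK HCK HCK
        (LinearMap.rTensor HCK delta.toLinearMap (delta x)) :=
  mem_coassocSubalgebra.1 <|
    (MvPolynomial.coassocSubalgebra_eq_top isCoassocAt_delta_X).symm ▸ Algebra.mem_top
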